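/- arXiv:2209.15118 — 7 statements merged into one kernel-verified Lean document; each statement's English description precedes it below -/
import Mathlib

section
/- Let G₀ and C be real n×n matrices, and let Q₀ and Q̄₀ be real n×n projectors (Q₀·Q₀ = Q₀, Q̄₀·Q̄₀ = Q̄₀) with im Q₀ = im Q̄₀ = ker G₀. Set P₀ = E − Q₀, G₁ = G₀ + C·Q₀, Ḡ₁ = G₀ + C·Q̄₀ and Z₁ = E + Q₀·Q̄₀·P₀. Then Ḡ₁ = G₁·Z₁. -/
lemma matrix_ext_mulVecLin {n : ℕ} (A B : Matrix (Fin n) (Fin n) ℝ)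
    (h : A.mulVecLin = B.mulVecLin) : A = B :=
  Matrix.toLin'.injective h

lemma proj_absorb {n : ℕ} (Q R : Matrix (Fin n) (Fin n) ℝ)
    (hQ : Q * Q = Q)
    (h : LinearMap.range R.mulVecLin ≤ LinearMap.range Q.mulVecLin) :
    Q * R = R := by
  apply matrix_ext_mulVecLin
  apply LinearMap.ext; intro v
  rw [Matrix.mulVecLin_mul, LinearMap.comp_apply]
  obtain ⟨y, hy⟩ := h ⟨v, rfl⟩
  calc Q.mulVecLin (R.mulVecLin v) = Q.mulVecLin (Q.mulVecLin y) := by rw [hy]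
    _ = (Q * Q).mulVecLin y := by rw [Matrix.mulVecLin_mul]; rfl
    _ = Q.mulVecLin y := by rw [hQ]
    _ = R.mulVecLin v := hy

lemma ker_mul {n : ℕ} (G Q : Matrix (Fin n) (Fin n) ℝ)
    (h : LinearMap.range Q.mulVecLin ≤ LinearMap.ker G.mulVecLin) :
    G * Q = 0 := by
  apply matrix_ext_mulVecLin
  apply LinearMap.ext; intro v
  have := h ⟨v, rfl⟩
  rw [LinearMap.mem_ker] at this
  rw [Matrix.mulVecLin_mul, LinearMap.comp_apply, this]
  simp

/-- Part of Lemma 3.17 (pointwise): if `Q₀, Q̄₀` are projectors onto `ker G₀`, and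
`G₁ = G₀ + C·Q₀`, `Ḡ₁ = G₀ + C·Q̄₀`, `Z₁ = E + Q₀·Q̄₀·P₀` with `P₀ = E - Q₀`, then
`Ḡ₁ = G₁·Z₁`. -/
theorem Gbar_eq_G_mul_Z {n : ℕ}
    (G₀ C Q₀ Qb₀ : Matrix (Fin n) (Fin n) ℝ)
    (h0 : Q₀ * Q₀ = Q₀) (hb : Qb₀ * Qb₀ = Qb₀)
    (hr0 : LinearMap.range Q₀.mulVecLin = LinearMap.ker G₀.mulVecLin)
    (hrb : LinearMap.range Qb₀.mulVecLin = LinearMap.ker G₀.mulVecLin) :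
    G₀ + C * Qb₀ = (G₀ + C * Q₀) * (1 + Q₀ * Qb₀ * (1 - Q₀)) := by
  have hGQ : G₀ * Q₀ = 0 := ker_mul _ _ hr0.le
  have h1 : Q₀ * Qb₀ = Qb₀ := proj_absorb _ _ h0 (hrb.trans hr0.symm).le
  have h2 : Qb₀ * Q₀ = Q₀ := proj_absorb _ _ hb (hr0.trans hrb.symm).le
  have e : (G₀ + C * Q₀) * (1 + Q₀ * Qb₀ * (1 - Q₀))
      = G₀ + C * Q₀ + (G₀ * Q₀) * Qb₀ * (1 - Q₀)
        + C * (Q₀ * Q₀) * Qb₀ * (1 - Q₀) := by noncomm_ring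
  rw [e, hGQ, h0, mul_assoc C Q₀ Qb₀, h1]
  have e2 : C * Qb₀ * (1 - Q₀) = C * Qb₀ - C * (Qb₀ * Q₀) := by noncomm_ring
  rw [e2, h2]
  noncomm_ring
end

section
/- Let G₀ and C be real n×n matrices, and let Q₀ and Q̄₀ be real n×n projectors (Q₀·Q₀ = Q₀, Q̄₀·Q̄₀ = Q̄₀) with im Q₀ = im Q̄₀ = ker G₀. Set G₁ = G₀ + C·Q₀ and Ḡ₁ = G₀ + C·Q̄₀. Then im G₁ = im Ḡ₁ and ker G₀ + ker G₁ = ker G₀ + ker Ḡ₁ (as subspaces of ℝ^n). Hence the subspaces im G₀, im G₁, N₀ = ker G₀ and N₀ ⊕ N₁ (with N₁ = ker G₁) do not depend on the choice of the admissible projectors. -/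
open Matrix

private lemma mat_eq_of_mulVec {n : ℕ} {M N : Matrix (Fin n) (Fin n) ℝ}
    (h : ∀ v, M *ᵥ v = N *ᵥ v) : M = N := by
  apply Matrix.toLin'.injective
  exact LinearMap.ext fun v => by simp [Matrix.toLin'_apply, h v]

/-- Independence of the matrix chain: if `Q₀, Q̄₀` are projectors onto `N₀ = ker G₀`,
and `G₁ = G₀ + C·Q₀`, `Ḡ₁ = G₀ + C·Q̄₀`, then `im G₁ = im Ḡ₁` and
`N₀ + ker G₁ = N₀ + ker Ḡ₁`; hence `im G₀`, `im G₁`, `N₀` and `N₀ ⊕ N₁` do not depend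
on the choice of the admissible projectors. -/
theorem matrix_chain_independence {n : ℕ}
    (G₀ C Q₀ Qb₀ : Matrix (Fin n) (Fin n) ℝ)
    (h0 : Q₀ * Q₀ = Q₀) (hb : Qb₀ * Qb₀ = Qb₀)
    (hr0 : LinearMap.range Q₀.mulVecLin = LinearMap.ker G₀.mulVecLin)
    (hrb : LinearMap.range Qb₀.mulVecLin = LinearMap.ker G₀.mulVecLin) :
    LinearMap.range (G₀ + C * Q₀).mulVecLin
      = LinearMap.range (G₀ + C * Qb₀).mulVecLin ∧
    LinearMap.ker G₀.mulVecLin ⊔ LinearMap.ker (G₀ + C * Q₀).mulVecLin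
      = LinearMap.ker G₀.mulVecLin ⊔ LinearMap.ker (G₀ + C * Qb₀).mulVecLin := by
  -- G₀ * Q₀ = 0 and G₀ * Qb₀ = 0
  have hGQ : ∀ Q : Matrix (Fin n) (Fin n) ℝ,
      LinearMap.range Q.mulVecLin = LinearMap.ker G₀.mulVecLin → G₀ * Q = 0 := by
    intro Q hQ
    apply mat_eq_of_mulVec
    intro v
    have : Q.mulVecLin v ∈ LinearMap.ker G₀.mulVecLin := by
      rw [← hQ]; exact ⟨v, rfl⟩
    simpa [Matrix.mulVec_mulVec, Matrix.mulVecLin_apply] using this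
  have hG0Q0 : G₀ * Q₀ = 0 := hGQ Q₀ hr0
  have hG0Qb : G₀ * Qb₀ = 0 := hGQ Qb₀ hrb
  -- Q₀ * Qb₀ = Qb₀ and Qb₀ * Q₀ = Q₀
  have hQQ : ∀ Q Q' : Matrix (Fin n) (Fin n) ℝ, Q * Q = Q →
      LinearMap.range Q.mulVecLin = LinearMap.ker G₀.mulVecLin →
      LinearMap.range Q'.mulVecLin = LinearMap.ker G₀.mulVecLin → Q * Q' = Q' := by
    intro Q Q' hQidem hQ hQ'
    apply mat_eq_of_mulVec
    intro v
    have : Q'.mulVecLin v ∈ LinearMap.range Q.mulVecLin := by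
      rw [hQ, ← hQ']; exact ⟨v, rfl⟩
    obtain ⟨y, hy⟩ := this
    simp only [Matrix.mulVecLin_apply] at hy
    calc (Q * Q') *ᵥ v = Q *ᵥ (Q' *ᵥ v) := by rw [Matrix.mulVec_mulVec]
    _ = Q *ᵥ (Q *ᵥ y) := by rw [hy]
    _ = (Q * Q) *ᵥ y := by rw [Matrix.mulVec_mulVec]
    _ = Q *ᵥ y := by rw [hQidem]
    _ = Q' *ᵥ v := hy
  have h1 : Q₀ * Qb₀ = Qb₀ := hQQ Q₀ Qb₀ h0 hr0 hrb
  have h2 : Qb₀ * Q₀ = Q₀ := hQQ Qb₀ Q₀ hb hrb hr0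
  set Z : Matrix (Fin n) (Fin n) ℝ := 1 - Q₀ + Qb₀ with hZ
  set Z' : Matrix (Fin n) (Fin n) ℝ := 1 - Qb₀ + Q₀ with hZ'
  have hZZ' : Z * Z' = 1 := by
    simp only [hZ, hZ']
    noncomm_ring
    rw [h0, hb, h1, h2]; abel
  have hZ'Z : Z' * Z = 1 := by
    simp only [hZ, hZ']
    noncomm_ring
    rw [h0, hb, h1, h2]; abel
  have hG1Z : (G₀ + C * Q₀) * Z = G₀ + C * Qb₀ := by
    simp only [hZ]
    noncomm_ring
    rw [hG0Q0, hG0Qb, h0, h1]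
    simp only [smul_zero, neg_zero]
    abel
  have hG1Z' : (G₀ + C * Qb₀) * Z' = G₀ + C * Q₀ := by
    simp only [hZ']
    noncomm_ring
    rw [hG0Q0, hG0Qb, hb, h2]
    simp only [smul_zero, neg_zero]
    abel
  constructor
  · -- ranges
    apply le_antisymm
    · rw [← hG1Z', Matrix.mulVecLin_mul]
      exact LinearMap.range_comp_le_range _ _
    · rw [← hG1Z, Matrix.mulVecLin_mul]
      exact LinearMap.range_comp_le_range _ _
  · -- kernels
    have key : ∀ A B W : Matrix (Fin n) (Fin n) ℝ, B * W = A →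
        (∀ x, W *ᵥ x - x ∈ LinearMap.ker G₀.mulVecLin) →
        LinearMap.ker A.mulVecLin ≤ LinearMap.ker G₀.mulVecLin ⊔ LinearMap.ker B.mulVecLin := by
      intro A B W hBW hW x hx
      simp only [LinearMap.mem_ker, Matrix.mulVecLin_apply] at hx
      have hWx : W *ᵥ x ∈ LinearMap.ker B.mulVecLin := by
        simp only [LinearMap.mem_ker, Matrix.mulVecLin_apply]
        rw [Matrix.mulVec_mulVec, hBW, hx]
      have hxeq : x = -(W *ᵥ x - x) + W *ᵥ x := by abel
      rw [hxeq]
      exact Submodule.add_mem _ (Submodule.mem_sup_left (neg_mem (hW x)))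
        (Submodule.mem_sup_right hWx)
    have hW1 : ∀ x, Z' *ᵥ x - x ∈ LinearMap.ker G₀.mulVecLin := by
      intro x
      have h : Z' *ᵥ x - x = Q₀ *ᵥ x - Qb₀ *ᵥ x := by
        simp [hZ', Matrix.add_mulVec, Matrix.sub_mulVec, Matrix.one_mulVec]; abel
      rw [h]
      exact Submodule.sub_mem _ (hr0 ▸ ⟨x, rfl⟩) (hrb ▸ ⟨x, rfl⟩)
    have hW2 : ∀ x, Z *ᵥ x - x ∈ LinearMap.ker G₀.mulVecLin := by
      intro x
      have h : Z *ᵥ x - x = Qb₀ *ᵥ x - Q₀ *ᵥ x := by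
        simp [hZ, Matrix.add_mulVec, Matrix.sub_mulVec, Matrix.one_mulVec]; abel
      rw [h]
      exact Submodule.sub_mem _ (hrb ▸ ⟨x, rfl⟩) (hr0 ▸ ⟨x, rfl⟩)
    apply le_antisymm
    · exact sup_le le_sup_left
        (le_trans (key _ _ Z' hG1Z' hW1) (sup_le le_sup_left le_sup_right))
    · exact sup_le le_sup_left
        (le_trans (key _ _ Z hG1Z hW2) (sup_le le_sup_left le_sup_right))
end

section
/- Let A, C be real n×n matrices, let Q be a real n×n projector (Q·Q = Q), set P = E − Q, and assume A·P = A (equivalently A·Q = 0). If the matrix A₁ = A + C·Q is invertible, then A₁⁻¹·A = P and A₁⁻¹·C·Q = Q. -/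
/-- Lemma 4.4 (pointwise): if `Q` is a projector, `P = E - Q`, `A·P = A` and
`A₁ = A + C·Q` is invertible, then `A₁⁻¹·A = P` and `A₁⁻¹·C·Q = Q`. -/
theorem lemma_4_4 {n : ℕ}
    (A C Q : Matrix (Fin n) (Fin n) ℝ)
    (hQ : Q * Q = Q) (hAP : A * (1 - Q) = A)
    (hA₁ : IsUnit (A + C * Q)) :
    (A + C * Q)⁻¹ * A = 1 - Q ∧ (A + C * Q)⁻¹ * (C * Q) = Q := by
  have hinv : (A + C * Q)⁻¹ * (A + C * Q) = 1 :=
    Matrix.nonsing_inv_mul _ (Matrix.isUnit_iff_isUnit_det _ |>.mp hA₁)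
  have hAQ : A * Q = 0 := by
    have := hAP
    rw [Matrix.mul_sub, Matrix.mul_one, sub_eq_self] at this
    exact this
  constructor
  · have h1 : (A + C * Q) * (1 - Q) = A := by
      rw [Matrix.add_mul, hAP, Matrix.mul_assoc, Matrix.mul_sub, Matrix.mul_one, hQ,
        sub_self, Matrix.mul_zero, add_zero]
    calc (A + C * Q)⁻¹ * A = (A + C * Q)⁻¹ * ((A + C * Q) * (1 - Q)) := by rw [h1]
      _ = 1 - Q := by rw [← Matrix.mul_assoc, hinv, Matrix.one_mul]
  · have h2 : (A + C * Q) * Q = C * Q := by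
      rw [Matrix.add_mul, hAQ, zero_add, Matrix.mul_assoc, hQ]
    calc (A + C * Q)⁻¹ * (C * Q) = (A + C * Q)⁻¹ * ((A + C * Q) * Q) := by rw [h2]
      _ = Q := by rw [← Matrix.mul_assoc, hinv, Matrix.one_mul]
end

section
/- Let A, C : ℝ → M_n(ℝ) and f : ℝ → ℝ^n be continuous, let P : ℝ → M_n(ℝ) be continuously differentiable with P(t)·P(t) = P(t) and A(t)·P(t) = A(t) for all t, set Q(t) = E − P(t), and assume that A₁(t) = A(t) + C(t)·Q(t) is invertible for every t. Suppose x : ℝ → ℝ^n is such that t ↦ P(t)·x(t) is differentiable and A(t)·(P x)′(t) = C(t)·x(t) + f(t) for all t. Then u(t) = P(t)·x(t) and v(t) = Q(t)·x(t) satisfy, for all t: u′(t) = P′(t)·u(t) + P(t)·A₁(t)⁻¹·C(t)·u(t) + P(t)·A₁(t)⁻¹·f(t) and v(t) = −Q(t)·A₁(t)⁻¹·C(t)·u(t) − Q(t)·A₁(t)⁻¹·f(t). -/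
open Matrix

/-- Decoupling (4.10) of the standard-form index-one equation `A (Px)′ = C x + f`
(time scale 𝕋 = ℝ): with `Q = E - P`, `A₁ = A + C·Q` invertible, `u = P·x`, `v = Q·x`,
one has `u′ = P′·u + P·A₁⁻¹·C·u + P·A₁⁻¹·f` and `v = -Q·A₁⁻¹·C·u - Q·A₁⁻¹·f`. -/
theorem standard_form_decoupling {n : ℕ}
    (A C : ℝ → Matrix (Fin n) (Fin n) ℝ) (f : ℝ → Fin n → ℝ)
    (hA : Continuous A) (hC : Continuous C) (hf : Continuous f)
    (P P' : ℝ → Matrix (Fin n) (Fin n) ℝ)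
    (hP : ∀ t i j, HasDerivAt (fun s => P s i j) (P' t i j) t)
    (hP' : Continuous P')
    (hPproj : ∀ t, P t * P t = P t)
    (hAP : ∀ t, A t * P t = A t)
    (hA₁ : ∀ t, IsUnit (A t + C t * (1 - P t)))
    (x : ℝ → Fin n → ℝ)
    (hx : ∀ t, DifferentiableAt ℝ (fun s => P s *ᵥ x s) t)
    (heq : ∀ t, A t *ᵥ deriv (fun s => P s *ᵥ x s) t = C t *ᵥ x t + f t) :
    (∀ t, deriv (fun s => P s *ᵥ x s) t =
        P' t *ᵥ (P t *ᵥ x t)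
        + (P t * (A t + C t * (1 - P t))⁻¹ * C t) *ᵥ (P t *ᵥ x t)
        + (P t * (A t + C t * (1 - P t))⁻¹) *ᵥ f t) ∧
    (∀ t, (1 - P t) *ᵥ x t =
        -(((1 - P t) * (A t + C t * (1 - P t))⁻¹ * C t) *ᵥ (P t *ᵥ x t))
        - ((1 - P t) * (A t + C t * (1 - P t))⁻¹) *ᵥ f t) := by
  set u : ℝ → Fin n → ℝ := fun s => P s *ᵥ x s with hu
  -- algebraic facts at each `t`
  have hQP : ∀ t, (1 - P t) * P t = 0 := fun t => by
    rw [Matrix.sub_mul, Matrix.one_mul, hPproj t, sub_self]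
  have hPQ : ∀ t, P t * (1 - P t) = 0 := fun t => by
    rw [Matrix.mul_sub, Matrix.mul_one, hPproj t, sub_self]
  have hQQ : ∀ t, (1 - P t) * (1 - P t) = 1 - P t := fun t => by
    rw [Matrix.mul_sub, Matrix.mul_one, hQP t, sub_zero]
  have hinv : ∀ t, (A t + C t * (1 - P t))⁻¹ * (A t + C t * (1 - P t)) = 1 :=
    fun t => Matrix.nonsing_inv_mul _ ((Matrix.isUnit_iff_isUnit_det _).mp (hA₁ t))
  have hinvA : ∀ t, (A t + C t * (1 - P t))⁻¹ * A t = P t := by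
    intro t
    have h1 : (A t + C t * (1 - P t)) * P t = A t := by
      rw [Matrix.add_mul, hAP t, Matrix.mul_assoc, hQP t, Matrix.mul_zero, add_zero]
    have h2 : (A t + C t * (1 - P t))⁻¹ * ((A t + C t * (1 - P t)) * P t) = P t := by
      rw [← Matrix.mul_assoc, hinv t, Matrix.one_mul]
    rw [h1] at h2
    exact h2
  have hinvCQ : ∀ t, (A t + C t * (1 - P t))⁻¹ * (C t * (1 - P t)) = 1 - P t := by
    intro t
    have hAQ : A t * (1 - P t) = 0 := by
      rw [Matrix.mul_sub, Matrix.mul_one, hAP t, sub_self]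
    have h1 : (A t + C t * (1 - P t)) * (1 - P t) = C t * (1 - P t) := by
      rw [Matrix.add_mul, hAQ, zero_add, Matrix.mul_assoc, hQQ t]
    have h2 : (A t + C t * (1 - P t))⁻¹ * ((A t + C t * (1 - P t)) * (1 - P t))
        = 1 - P t := by
      rw [← Matrix.mul_assoc, hinv t, Matrix.one_mul]
    rw [h1] at h2
    exact h2
  -- the key consequence of the equation
  have h1 : ∀ t, P t *ᵥ deriv u t
      = ((A t + C t * (1 - P t))⁻¹ * C t) *ᵥ (P t *ᵥ x t)
        + (1 - P t) *ᵥ x t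
        + (A t + C t * (1 - P t))⁻¹ *ᵥ f t := by
    intro t
    have h2 := congrArg (fun w => (A t + C t * (1 - P t))⁻¹ *ᵥ w) (heq t)
    simp only [Matrix.mulVec_mulVec, hinvA t, Matrix.mulVec_add] at h2
    have hxsplit : x t = P t *ᵥ x t + (1 - P t) *ᵥ x t := by
      rw [Matrix.sub_mulVec, Matrix.one_mulVec]
      abel
    have h3 : ((A t + C t * (1 - P t))⁻¹ * C t) *ᵥ ((1 - P t) *ᵥ x t)
        = (1 - P t) *ᵥ x t := by
      rw [Matrix.mulVec_mulVec, Matrix.mul_assoc, hinvCQ t]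
    rw [h2]
    conv_lhs => rw [hxsplit, Matrix.mulVec_add, h3]
  -- second claim: multiply h1 by Q = 1 - P
  have hsecond : ∀ t, (1 - P t) *ᵥ x t =
      -(((1 - P t) * (A t + C t * (1 - P t))⁻¹ * C t) *ᵥ (P t *ᵥ x t))
      - ((1 - P t) * (A t + C t * (1 - P t))⁻¹) *ᵥ f t := by
    intro t
    have h2 := congrArg (fun w => (1 - P t) *ᵥ w) (h1 t)
    simp only [Matrix.mulVec_add, Matrix.mulVec_mulVec, hQP t, hQQ t,
      Matrix.zero_mulVec, Matrix.mul_assoc] at h2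
    simp only [Matrix.mul_assoc, Matrix.mulVec_mulVec]
    linear_combination -h2
  refine ⟨?_, hsecond⟩
  -- first claim: product rule since u = P·u
  intro t
  have hud : HasDerivAt u (deriv u t) t := (hx t).hasDerivAt
  have hudc : ∀ j, HasDerivAt (fun s => u s j) (deriv u t j) t := hasDerivAt_pi.1 hud
  have hgu : (fun s => P s *ᵥ u s) = u := by
    funext s
    simp only [hu, Matrix.mulVec_mulVec, hPproj s]
  have hprod0 : HasDerivAt (fun s => P s *ᵥ u s) (P' t *ᵥ u t + P t *ᵥ deriv u t) t := by
    apply hasDerivAt_pi.2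
    intro i
    have h3 : HasDerivAt (fun s => ∑ j, P s i j * u s j)
        (∑ j, (P' t i j * u t j + P t i j * deriv u t j)) t :=
      HasDerivAt.fun_sum fun j _ => (hP t i j).mul (hudc j)
    convert h3 using 1
    · rfl
    · rfl
    all_goals simp [Matrix.mulVec, dotProduct, Finset.sum_add_distrib]
  have hprod : HasDerivAt u (P' t *ᵥ u t + P t *ᵥ deriv u t) t := by
    rw [hgu] at hprod0
    exact hprod0
  have hder : deriv u t = P' t *ᵥ u t + P t *ᵥ deriv u t := hud.unique hprod
  have hPd : P t *ᵥ deriv u t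
      = (P t * ((A t + C t * (1 - P t))⁻¹ * (C t * P t))) *ᵥ x t
        + (P t * (A t + C t * (1 - P t))⁻¹) *ᵥ f t := by
    have h2 := congrArg (fun w => P t *ᵥ w) (h1 t)
    simpa only [Matrix.mulVec_add, Matrix.mulVec_mulVec, hPQ t, hPproj t,
      Matrix.zero_mulVec, add_zero, Matrix.mul_assoc] using h2
  have hut : u t = P t *ᵥ x t := rfl
  simp only [Matrix.mul_assoc, Matrix.mulVec_mulVec]
  rw [hder, hPd, hut]
  simp only [Matrix.mulVec_mulVec]
  abel
end

section
/- Let A : ℝ → M_{n×m}(ℝ), B : ℝ → M_{m×n}(ℝ), B⁻ : ℝ → M_{n×m}(ℝ), C : ℝ → M_n(ℝ) and f : ℝ → ℝ^n be continuous, and assume pointwise for all t: B·B⁻·B = B, B⁻·B·B⁻ = B⁻, B⁻·B = P₀, A·B·B⁻ = A; set Q₀ = E − P₀ and G₀ = A·B, assume G₁ = G₀ + C·Q₀ is invertible for every t, and assume W = B·P₀·B⁻ : ℝ → M_m(ℝ) is continuously differentiable. Suppose x : ℝ → ℝ^n is such that t ↦ B(t)·x(t) is differentiable and A(t)·(Bx)′(t)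 = C(t)·x(t) + f(t) for all t. Then u(t) = B(t)·P₀(t)·x(t) is differentiable and satisfies the inherent equation u′ = W′·u + B·P₀·G₁⁻¹·C·B⁻·u + B·P₀·G₁⁻¹·f, and v(t) = Q₀(t)·x(t) satisfies v = −Q₀·G₁⁻¹·C·B⁻·u − Q₀·G₁⁻¹·f (all identities pointwise in t). -/
open Matrix

/-- Derivative of a matrix-vector product with time-dependent matrix and vector. -/
private lemma hasDerivAt_mulVec' {p q : ℕ} {W : ℝ → Matrix (Fin p) (Fin q) ℝ}
    {g : ℝ → Fin q → ℝ} {W'' : Matrix (Fin p) (Fin q) ℝ} {g' : Fin q → ℝ} {t : ℝ}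
    (hW : ∀ i j, HasDerivAt (fun s => W s i j) (W'' i j) t)
    (hg : HasDerivAt g g' t) :
    HasDerivAt (fun s => W s *ᵥ g s) (W'' *ᵥ g t + W t *ᵥ g') t := by
  rw [hasDerivAt_pi]
  intro i
  have hgj : ∀ j, HasDerivAt (fun s => g s j) (g' j) t := fun j => hasDerivAt_pi.mp hg j
  have key : HasDerivAt (fun s => ∑ j, W s i j * g s j)
      (∑ j, (W'' i j * g t j + W t i j * g' j)) t :=
    HasDerivAt.fun_sum fun j _ => (hW i j).mul (hgj j)
  simpa [Matrix.mulVec, dotProduct, Finset.sum_add_distrib] using key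

/-- Decoupling (4.25) of the index-one equation `A (Bx)′ = C x + f` (time scale 𝕋 = ℝ):
with `P₀ = B⁻·B`, `Q₀ = E - P₀`, `G₀ = A·B`, `G₁ = G₀ + C·Q₀` invertible,
`W = B·P₀·B⁻` continuously differentiable, `u = B·P₀·x`, `v = Q₀·x`, one has the
inherent equation `u′ = W′·u + B·P₀·G₁⁻¹·C·B⁻·u + B·P₀·G₁⁻¹·f` and
`v = -Q₀·G₁⁻¹·C·B⁻·u - Q₀·G₁⁻¹·f`. -/
theorem index_one_decoupling {n m : ℕ}
    (A : ℝ → Matrix (Fin n) (Fin m) ℝ)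
    (B : ℝ → Matrix (Fin m) (Fin n) ℝ)
    (Binv : ℝ → Matrix (Fin n) (Fin m) ℝ)
    (C : ℝ → Matrix (Fin n) (Fin n) ℝ) (f : ℝ → Fin n → ℝ)
    (hA : Continuous A) (hB : Continuous B) (hBinv : Continuous Binv)
    (hC : Continuous C) (hf : Continuous f)
    (P₀ : ℝ → Matrix (Fin n) (Fin n) ℝ)
    (h1 : ∀ t, B t * Binv t * B t = B t)
    (h2 : ∀ t, Binv t * B t * Binv t = Binv t)
    (h3 : ∀ t, Binv t * B t = P₀ t)
    (h4 : ∀ t, A t * (B t * Binv t) = A t)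
    (hG₁ : ∀ t, IsUnit (A t * B t + C t * (1 - P₀ t)))
    (W' : ℝ → Matrix (Fin m) (Fin m) ℝ)
    (hW : ∀ t i j, HasDerivAt (fun s => (B s * P₀ s * Binv s) i j) (W' t i j) t)
    (hW' : Continuous W')
    (x : ℝ → Fin n → ℝ)
    (hx : ∀ t, DifferentiableAt ℝ (fun s => B s *ᵥ x s) t)
    (heq : ∀ t, A t *ᵥ deriv (fun s => B s *ᵥ x s) t = C t *ᵥ x t + f t) :
    (∀ t, HasDerivAt (fun s => (B s * P₀ s) *ᵥ x s)
        (W' t *ᵥ ((B t * P₀ t) *ᵥ x t)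
          + (B t * P₀ t * (A t * B t + C t * (1 - P₀ t))⁻¹ * C t * Binv t)
              *ᵥ ((B t * P₀ t) *ᵥ x t)
          + (B t * P₀ t * (A t * B t + C t * (1 - P₀ t))⁻¹) *ᵥ f t) t) ∧
    (∀ t, (1 - P₀ t) *ᵥ x t =
        -(((1 - P₀ t) * (A t * B t + C t * (1 - P₀ t))⁻¹ * C t * Binv t)
            *ᵥ ((B t * P₀ t) *ᵥ x t))
        - ((1 - P₀ t) * (A t * B t + C t * (1 - P₀ t))⁻¹) *ᵥ f t) := by
  -- basic pointwise matrix identities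
  have hP : ∀ t, P₀ t * P₀ t = P₀ t := by
    intro t; rw [← h3 t, ← Matrix.mul_assoc, h2 t]
  have hBP : ∀ t, B t * P₀ t = B t := by
    intro t; rw [← h3 t, ← Matrix.mul_assoc, h1 t]
  have hQ : ∀ t, (1 - P₀ t) * (1 - P₀ t) = 1 - P₀ t := by
    intro t; rw [sub_mul, one_mul, mul_sub, mul_one, hP t, sub_self, sub_zero]
  have hPQ : ∀ t, P₀ t * (1 - P₀ t) = 0 := by
    intro t; rw [mul_sub, mul_one, hP t, sub_self]
  have hQBinv : ∀ t, (1 - P₀ t) * Binv t = 0 := by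
    intro t; rw [Matrix.sub_mul, Matrix.one_mul, ← h3 t, h2 t, sub_self]
  have hG₁Binv : ∀ t, (A t * B t + C t * (1 - P₀ t)) * Binv t = A t := by
    intro t
    rw [Matrix.add_mul, Matrix.mul_assoc (C t), hQBinv t, Matrix.mul_zero, add_zero,
      Matrix.mul_assoc, h4 t]
  have hG₁Q : ∀ t, (A t * B t + C t * (1 - P₀ t)) * (1 - P₀ t) = C t * (1 - P₀ t) := by
    intro t
    rw [Matrix.add_mul, Matrix.mul_sub, Matrix.mul_one, Matrix.mul_assoc, hBP t, sub_self,
      zero_add, Matrix.mul_assoc, hQ t]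
  have hGi : ∀ t, (A t * B t + C t * (1 - P₀ t))⁻¹ * (A t * B t + C t * (1 - P₀ t)) = 1 :=
    fun t => Matrix.nonsing_inv_mul _ ((Matrix.isUnit_iff_isUnit_det _).mp (hG₁ t))
  have hInvA : ∀ t, (A t * B t + C t * (1 - P₀ t))⁻¹ * A t = Binv t := by
    intro t
    calc (A t * B t + C t * (1 - P₀ t))⁻¹ * A t
        = (A t * B t + C t * (1 - P₀ t))⁻¹ *
            ((A t * B t + C t * (1 - P₀ t)) * Binv t) := by rw [hG₁Binv t]
      _ = (A t * B t + C t * (1 - P₀ t))⁻¹ * (A t * B t + C t * (1 - P₀ t)) * Binv t :=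
          (Matrix.mul_assoc _ _ _).symm
      _ = Binv t := by rw [hGi t, Matrix.one_mul]
  have hInvCQ : ∀ t, (A t * B t + C t * (1 - P₀ t))⁻¹ * (C t * (1 - P₀ t)) = 1 - P₀ t := by
    intro t
    calc (A t * B t + C t * (1 - P₀ t))⁻¹ * (C t * (1 - P₀ t))
        = (A t * B t + C t * (1 - P₀ t))⁻¹ *
            ((A t * B t + C t * (1 - P₀ t)) * (1 - P₀ t)) := by rw [hG₁Q t]
      _ = (A t * B t + C t * (1 - P₀ t))⁻¹ * (A t * B t + C t * (1 - P₀ t)) * (1 - P₀ t) :=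
          (Matrix.mul_assoc _ _ _).symm
      _ = 1 - P₀ t := by rw [hGi t, Matrix.one_mul]
  -- vector-level atomic facts
  have f1 : ∀ t (v : Fin n → ℝ), Binv t *ᵥ (B t *ᵥ v) = P₀ t *ᵥ v := by
    intro t v; rw [mulVec_mulVec, h3 t]
  have f2 : ∀ t (v : Fin n → ℝ), B t *ᵥ (P₀ t *ᵥ v) = B t *ᵥ v := by
    intro t v; rw [mulVec_mulVec, hBP t]
  have f3 : ∀ t (v : Fin n → ℝ), P₀ t *ᵥ (P₀ t *ᵥ v) = P₀ t *ᵥ v := by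
    intro t v; rw [mulVec_mulVec, hP t]
  have f4 : ∀ t (v : Fin m → ℝ), (1 - P₀ t) *ᵥ (Binv t *ᵥ v) = 0 := by
    intro t v; rw [mulVec_mulVec, hQBinv t, zero_mulVec]
  have f5 : ∀ t (v : Fin m → ℝ),
      (A t * B t + C t * (1 - P₀ t))⁻¹ *ᵥ (A t *ᵥ v) = Binv t *ᵥ v := by
    intro t v; rw [mulVec_mulVec, hInvA t]
  have f6 : ∀ t (v : Fin n → ℝ),
      (A t * B t + C t * (1 - P₀ t))⁻¹ *ᵥ (C t *ᵥ ((1 - P₀ t) *ᵥ v))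
        = (1 - P₀ t) *ᵥ v := by
    intro t v; rw [mulVec_mulVec, mulVec_mulVec, Matrix.mul_assoc, hInvCQ t]
  have f7 : ∀ t (v : Fin n → ℝ), (1 - P₀ t) *ᵥ ((1 - P₀ t) *ᵥ v) = (1 - P₀ t) *ᵥ v := by
    intro t v; rw [mulVec_mulVec, hQ t]
  have f8 : ∀ t (v : Fin n → ℝ), P₀ t *ᵥ ((1 - P₀ t) *ᵥ v) = 0 := by
    intro t v; rw [mulVec_mulVec, hPQ t, zero_mulVec]
  have hCx : ∀ t, C t *ᵥ x t
      = C t *ᵥ (P₀ t *ᵥ x t) + C t *ᵥ ((1 - P₀ t) *ᵥ x t) := by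
    intro t
    rw [← mulVec_add, ← add_mulVec]
    congr 1
    simp
  constructor
  · -- inherent ODE for u = B·P₀·x = B·x
    intro t
    have hg : HasDerivAt (fun s => B s *ᵥ x s) (deriv (fun s => B s *ᵥ x s) t) t :=
      (hx t).hasDerivAt
    have hder : HasDerivAt (fun s => (B s * P₀ s * Binv s) *ᵥ (B s *ᵥ x s))
        (W' t *ᵥ (B t *ᵥ x t)
          + (B t * P₀ t * Binv t) *ᵥ deriv (fun s => B s *ᵥ x s) t) t :=
      hasDerivAt_mulVec' (hW t) hg
    have hfun : (fun s => (B s * P₀ s) *ᵥ x s)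
        = fun s => (B s * P₀ s * Binv s) *ᵥ (B s *ᵥ x s) := by
      funext s
      simp only [← mulVec_mulVec, f1, f3]
    have hBg' : (B t * P₀ t * Binv t) *ᵥ deriv (fun s => B s *ᵥ x s) t
        = B t *ᵥ (P₀ t *ᵥ ((A t * B t + C t * (1 - P₀ t))⁻¹ *ᵥ (C t *ᵥ x t + f t))) := by
      rw [← mulVec_mulVec, ← mulVec_mulVec,
        show Binv t *ᵥ deriv (fun s => B s *ᵥ x s) t
            = (A t * B t + C t * (1 - P₀ t))⁻¹ *ᵥ (C t *ᵥ x t + f t) from by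
          rw [← heq t, f5 t]]
    have hval : W' t *ᵥ ((B t * P₀ t) *ᵥ x t)
          + (B t * P₀ t * (A t * B t + C t * (1 - P₀ t))⁻¹ * C t * Binv t)
              *ᵥ ((B t * P₀ t) *ᵥ x t)
          + (B t * P₀ t * (A t * B t + C t * (1 - P₀ t))⁻¹) *ᵥ f t
        = W' t *ᵥ (B t *ᵥ x t)
          + (B t * P₀ t * Binv t) *ᵥ deriv (fun s => B s *ᵥ x s) t := by
      rw [hBg']
      simp only [← mulVec_mulVec, mulVec_add, hCx t, f6, f8, f1, f3, f2,
        Matrix.mulVec_zero, add_zero]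
      abel
    rw [hfun, hval]
    exact hder
  · -- algebraic part for v = Q₀·x
    intro t
    have l1 : (1 - P₀ t) *ᵥ ((A t * B t + C t * (1 - P₀ t))⁻¹
        *ᵥ (A t *ᵥ deriv (fun s => B s *ᵥ x s) t)) = 0 := by
      rw [f5 t, f4 t]
    have l2 : (1 - P₀ t) *ᵥ ((A t * B t + C t * (1 - P₀ t))⁻¹
          *ᵥ (A t *ᵥ deriv (fun s => B s *ᵥ x s) t))
        = (1 - P₀ t) *ᵥ ((A t * B t + C t * (1 - P₀ t))⁻¹ *ᵥ (C t *ᵥ x t + f t)) := by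
      rw [heq t]
    have l3 : (1 - P₀ t) *ᵥ ((A t * B t + C t * (1 - P₀ t))⁻¹ *ᵥ (C t *ᵥ x t + f t))
        = (1 - P₀ t) *ᵥ ((A t * B t + C t * (1 - P₀ t))⁻¹ *ᵥ (C t *ᵥ (P₀ t *ᵥ x t)))
          + (1 - P₀ t) *ᵥ x t
          + (1 - P₀ t) *ᵥ ((A t * B t + C t * (1 - P₀ t))⁻¹ *ᵥ f t) := by
      simp only [hCx t, mulVec_add, f6, f7]
    have key : (0 : Fin n → ℝ)
        = (1 - P₀ t) *ᵥ ((A t * B t + C t * (1 - P₀ t))⁻¹ *ᵥ (C t *ᵥ (P₀ t *ᵥ x t)))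
          + (1 - P₀ t) *ᵥ x t
          + (1 - P₀ t) *ᵥ ((A t * B t + C t * (1 - P₀ t))⁻¹ *ᵥ f t) :=
      l1.symm.trans (l2.trans l3)
    simp only [← mulVec_mulVec, f1, f3]
    linear_combination -key
end

section
/- With the same data and pointwise hypotheses as in the decoupling (B·B⁻·B = B, B⁻·B·B⁻ = B⁻, B⁻·B = P₀, A·B·B⁻ = A, Q₀ = E − P₀, G₀ = A·B, G₁ = G₀ + C·Q₀ invertible for every t, W = B·P₀·B⁻ continuously differentiable, A, B, B⁻, C, f continuous), suppose conversely that u : ℝ → ℝ^m is continuously differentiable, satisfies W(t)·u(t) = u(t) for all t, and solves the inherent equation u′ = W′·u + B·P₀·G₁⁻¹·C·B⁻·u + B·P₀·G₁⁻¹·f. Define v(t) = −Q₀(t)·G₁(t)⁻¹·C(t)·B⁻(t)·u(t) − Q₀(t)·G₁(t)⁻¹·f(t) and x(t) = B⁻(t)·u(t) + v(t). Then t ↦ B(t)·x(t) is differentiable and A(t)·(Bx)′(t) = C(t)·x(t) + f(t) for all t, i.e. the decoupling process is reversible. -/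
open Matrix

/-- Reversibility of the decoupling: if `u` is C¹ with `W·u = u` and solves the
inherent equation, and `v = -Q₀·G₁⁻¹·C·B⁻·u - Q₀·G₁⁻¹·f`, `x = B⁻·u + v`, then
`B·x` is differentiable and `A (Bx)′ = C x + f`. -/
theorem index_one_decoupling_reversible {n m : ℕ}
    (A : ℝ → Matrix (Fin n) (Fin m) ℝ)
    (B : ℝ → Matrix (Fin m) (Fin n) ℝ)
    (Binv : ℝ → Matrix (Fin n) (Fin m) ℝ)
    (C : ℝ → Matrix (Fin n) (Fin n) ℝ) (f : ℝ → Fin n → ℝ)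
    (hA : Continuous A) (hB : Continuous B) (hBinv : Continuous Binv)
    (hC : Continuous C) (hf : Continuous f)
    (P₀ : ℝ → Matrix (Fin n) (Fin n) ℝ)
    (h1 : ∀ t, B t * Binv t * B t = B t)
    (h2 : ∀ t, Binv t * B t * Binv t = Binv t)
    (h3 : ∀ t, Binv t * B t = P₀ t)
    (h4 : ∀ t, A t * (B t * Binv t) = A t)
    (hG₁ : ∀ t, IsUnit (A t * B t + C t * (1 - P₀ t)))
    (W' : ℝ → Matrix (Fin m) (Fin m) ℝ)
    (hW : ∀ t i j, HasDerivAt (fun s => (B s * P₀ s * Binv s) i j) (W' t i j) t)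
    (hW' : Continuous W')
    (u u' : ℝ → Fin m → ℝ)
    (hu : ∀ t, HasDerivAt u (u' t) t) (hu' : Continuous u')
    (hWu : ∀ t, (B t * P₀ t * Binv t) *ᵥ u t = u t)
    (hueq : ∀ t, u' t =
        W' t *ᵥ u t
        + (B t * P₀ t * (A t * B t + C t * (1 - P₀ t))⁻¹ * C t * Binv t) *ᵥ u t
        + (B t * P₀ t * (A t * B t + C t * (1 - P₀ t))⁻¹) *ᵥ f t)
    (v x : ℝ → Fin n → ℝ)
    (hv : ∀ t, v t =
        -(((1 - P₀ t) * (A t * B t + C t * (1 - P₀ t))⁻¹ * C t * Binv t) *ᵥ u t)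
        - ((1 - P₀ t) * (A t * B t + C t * (1 - P₀ t))⁻¹) *ᵥ f t)
    (hxdef : ∀ t, x t = Binv t *ᵥ u t + v t) :
    (∀ t, DifferentiableAt ℝ (fun s => B s *ᵥ x s) t) ∧
    (∀ t, A t *ᵥ deriv (fun s => B s *ᵥ x s) t = C t *ᵥ x t + f t) := by
  -- abbreviations
  set Q₀ : ℝ → Matrix (Fin n) (Fin n) ℝ := fun t => 1 - P₀ t with hQ₀
  -- B * Q₀ = 0
  have hBQ : ∀ t, B t * (1 - P₀ t) = 0 := by
    intro t
    rw [Matrix.mul_sub, Matrix.mul_one, ← h3, ← Matrix.mul_assoc, h1, sub_self]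
  -- W = B * Binv
  have hWeq : ∀ s, B s * P₀ s * Binv s = B s * Binv s := by
    intro s
    rw [← h3, ← Matrix.mul_assoc, h1]
  -- W projector
  have hWW : ∀ s, (B s * P₀ s * Binv s) * (B s * P₀ s * Binv s) = B s * P₀ s * Binv s := by
    intro s
    rw [hWeq, ← Matrix.mul_assoc, h1]
  -- B * x = u
  have hBx : ∀ t, B t *ᵥ x t = u t := by
    intro t
    have hBv : B t *ᵥ v t = 0 := by
      rw [hv t, Matrix.mulVec_sub, Matrix.mulVec_neg, Matrix.mulVec_mulVec,
        Matrix.mulVec_mulVec, ← Matrix.mul_assoc, ← Matrix.mul_assoc, ← Matrix.mul_assoc,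
        hBQ, Matrix.zero_mul, Matrix.zero_mul, Matrix.zero_mul, Matrix.zero_mulVec,
        Matrix.zero_mulVec, neg_zero, sub_zero]
    have : B t *ᵥ (Binv t *ᵥ u t) = u t := by
      rw [Matrix.mulVec_mulVec, ← hWeq, hWu]
    rw [hxdef t, Matrix.mulVec_add, this, hBv, add_zero]
  have hfun : (fun s => B s *ᵥ x s) = u := funext hBx
  constructor
  · intro t
    rw [hfun]
    exact (hu t).differentiableAt
  · intro t
    rw [hfun, (hu t).deriv]
    -- derivative of projector identity : W' = W'*W + W*W'
    have hWW' : W' t = W' t * (B t * P₀ t * Binv t) + (B t * P₀ t * Binv t) * W' t := by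
      ext i j
      have hlhs : HasDerivAt (fun s => ∑ k, (B s * P₀ s * Binv s) i k * (B s * P₀ s * Binv s) k j)
          (W' t i j) t := by
        have heq : (fun s => ∑ k, (B s * P₀ s * Binv s) i k * (B s * P₀ s * Binv s) k j)
            = fun s => (B s * P₀ s * Binv s) i j := by
          funext s
          rw [← Matrix.mul_apply, hWW s]
        rw [heq]
        exact hW t i j
      have hrhs : HasDerivAt (fun s => ∑ k, (B s * P₀ s * Binv s) i k * (B s * P₀ s * Binv s) k j)
          (∑ k, (W' t i k * (B t * P₀ t * Binv t) k j + (B t * P₀ t * Binv t) i k * W' t k j)) t :=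
        HasDerivAt.fun_sum (fun k _ => (hW t i k).mul (hW t k j))
      have := hlhs.unique hrhs
      rw [this]
      simp [Matrix.add_apply, Matrix.mul_apply, Finset.sum_add_distrib]
    -- A * W = A
    have hAW : A t * (B t * P₀ t * Binv t) = A t := by rw [hWeq, h4]
    -- A * W' *ᵥ u = 0
    have hAW'u : A t *ᵥ (W' t *ᵥ u t) = 0 := by
      have hu_fix : (B t * P₀ t * Binv t) *ᵥ u t = u t := hWu t
      calc A t *ᵥ (W' t *ᵥ u t)
          = A t *ᵥ (W' t *ᵥ ((B t * P₀ t * Binv t) *ᵥ u t)) := by rw [hu_fix]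
        _ = (A t * (W' t * (B t * P₀ t * Binv t))) *ᵥ u t := by
            rw [Matrix.mulVec_mulVec, Matrix.mulVec_mulVec, Matrix.mul_assoc]
        _ = (A t * (W' t - (B t * P₀ t * Binv t) * W' t)) *ᵥ u t := by
            have hm : W' t * (B t * P₀ t * Binv t)
                = W' t - (B t * P₀ t * Binv t) * W' t := by
              rw [eq_sub_iff_add_eq]
              exact hWW'.symm
            rw [hm]
        _ = 0 := by
            rw [Matrix.mul_sub, ← Matrix.mul_assoc, hAW, sub_self, Matrix.zero_mulVec]
    set G : Matrix (Fin n) (Fin n) ℝ := A t * B t + C t * (1 - P₀ t) with hG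
    have hGdet : IsUnit G.det := (Matrix.isUnit_iff_isUnit_det G).mp (hG₁ t)
    have hGGi : G * G⁻¹ = 1 := Matrix.mul_nonsing_inv G hGdet
    -- A * B * P₀ = A * B
    have hABP : A t * B t * P₀ t = A t * B t := by
      rw [← h3, ← Matrix.mul_assoc, Matrix.mul_assoc (A t) (B t) (Binv t), h4]
    -- A * B * G⁻¹ = 1 - C * Q₀ * G⁻¹
    have hABGi : A t * B t * G⁻¹ = 1 - C t * (1 - P₀ t) * G⁻¹ := by
      rw [eq_sub_iff_add_eq, ← Matrix.add_mul, ← hG, hGGi]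
    -- now compute
    rw [hueq t, hxdef t, hv t]
    rw [Matrix.mulVec_add, Matrix.mulVec_add, hAW'u, zero_add]
    rw [Matrix.mulVec_mulVec, Matrix.mulVec_mulVec]
    rw [Matrix.mulVec_add, Matrix.mulVec_sub, Matrix.mulVec_neg, Matrix.mulVec_mulVec]
    have e1 : A t * (B t * P₀ t * G⁻¹ * C t * Binv t)
        = C t * Binv t - C t * ((1 - P₀ t) * G⁻¹ * C t * Binv t) := by
      have : A t * (B t * P₀ t * G⁻¹ * C t * Binv t)
          = (A t * B t * P₀ t) * G⁻¹ * C t * Binv t := by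
        simp only [Matrix.mul_assoc]
      rw [this, hABP, hABGi, Matrix.sub_mul, Matrix.sub_mul, Matrix.one_mul]
      simp only [Matrix.mul_assoc]
    have e2 : A t * (B t * P₀ t * G⁻¹) = 1 - C t * ((1 - P₀ t) * G⁻¹) := by
      have : A t * (B t * P₀ t * G⁻¹) = (A t * B t * P₀ t) * G⁻¹ := by
        simp only [Matrix.mul_assoc]
      rw [this, hABP, hABGi, Matrix.mul_assoc]
    rw [e1, e2]
    rw [Matrix.sub_mulVec, Matrix.sub_mulVec, Matrix.one_mulVec]
    simp only [Matrix.mulVec_mulVec, Matrix.mul_assoc]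
    abel
end

section
/- Let B : ℝ → M_{m×n}(ℝ), B⁻ : ℝ → M_{n×m}(ℝ), P₀ : ℝ → M_n(ℝ) satisfy pointwise B⁻·B = P₀ and P₀·P₀ = P₀, and assume W = B·P₀·B⁻ : ℝ → M_m(ℝ) is continuously differentiable. Let M : ℝ → M_m(ℝ) and g : ℝ → ℝ^m be continuous with W(t)·M(t) = M(t) and W(t)·g(t) = g(t) for all t (as holds for M = B·P₀·G₁⁻¹·C·B⁻ and g = B·P₀·G₁⁻¹·f). Suppose u : ℝ → ℝ^m is differentiable and solves the inherent equation u′(t) = W′(t)·u(t) + M(t)·u(t) + g(t) for all t. If u(t₀) ∈ im(B(t₀)·P₀(t₀)) for some t₀ ∈ ℝ, then u(t) ∈ im(B(t)·P₀(t)) for every t ∈ ℝ; that is, the time-varying subspace im(B·P₀) is an invariant subspace for the inherent equation. -/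
open Matrix

/-- derivative of `s ↦ A s *ᵥ x s` entry-wise. -/
lemma hasDerivAt_mulVec'_s15 {m n : ℕ} {A : ℝ → Matrix (Fin m) (Fin n) ℝ}
    {A' : Matrix (Fin m) (Fin n) ℝ} {x : ℝ → Fin n → ℝ} {x' : Fin n → ℝ} {t : ℝ}
    (hA : ∀ i j, HasDerivAt (fun s => A s i j) (A' i j) t)
    (hx : HasDerivAt x x' t) :
    HasDerivAt (fun s => A s *ᵥ x s) (A' *ᵥ x t + A t *ᵥ x') t := by
  rw [hasDerivAt_pi] at hx ⊢
  intro i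
  have : ∀ j ∈ Finset.univ, HasDerivAt (fun s => A s i j * x s j)
      (A' i j * x t j + A t i j * x' j) t := fun j _ => (hA i j).mul (hx j)
  have h := HasDerivAt.fun_sum this
  simp only [Matrix.mulVec, dotProduct, Pi.add_apply]
  rw [← Finset.sum_add_distrib]
  exact h

/-- Zero is the unique solution of `v' = -(W' t *ᵥ v)` with a zero initial value. -/
lemma ode_vanish {m : ℕ} (W' : ℝ → Matrix (Fin m) (Fin m) ℝ) (hW' : Continuous W')
    (v : ℝ → Fin m → ℝ) (hv : ∀ t, HasDerivAt v (-(W' t *ᵥ v t)) t)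
    (t₀ : ℝ) (h0 : v t₀ = 0) : ∀ t, v t = 0 := by
  intro t
  set a := min t t₀ - 1 with ha
  set b := max t t₀ + 1 with hb
  have hab : a < b := by
    have h1 : min t t₀ ≤ max t t₀ := le_trans (min_le_left _ _) (le_max_left _ _)
    linarith
  have htmem : t ∈ Set.Icc a b := by
    constructor
    · have := min_le_left t t₀; linarith
    · have := le_max_left t t₀; linarith
  have ht₀mem : t₀ ∈ Set.Ioo a b := by
    constructor
    · have := min_le_right t t₀; linarith
    · have := le_max_right t t₀; linarith
  set π : ℝ → ℝ := fun s => max a (min s b) with hπ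
  have hπcont : Continuous π := continuous_const.max (continuous_id.min continuous_const)
  have hπmem : ∀ s, π s ∈ Set.Icc a b := fun s =>
    ⟨le_max_left _ _, max_le hab.le (min_le_right _ _)⟩
  have hπeq : ∀ s ∈ Set.Icc a b, π s = s := by
    intro s hs
    simp only [hπ]
    rw [min_eq_left hs.2, max_eq_right hs.1]
  have hentry : ∀ i j, Continuous fun s => W' (π s) i j := fun i j =>
    ((continuous_apply j).comp ((continuous_apply i).comp (hW'.comp hπcont)))
  set c : ℝ → ℝ := fun s => ∑ i, ∑ j, |W' (π s) i j| with hc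
  have hccont : Continuous c := by
    apply continuous_finset_sum
    intro i _
    apply continuous_finset_sum
    intro j _
    exact (hentry i j).abs
  obtain ⟨s₀, hs₀mem, hs₀max⟩ := isCompact_Icc.exists_isMaxOn (Set.nonempty_Icc.2 hab.le)
    hccont.continuousOn
  set K : NNReal := ⟨max (c s₀) 0, le_max_right _ _⟩ with hK
  have hcK : ∀ s, c s ≤ K := by
    intro s
    have h1 : π (π s) = π s := hπeq _ (hπmem s)
    have h2 : c (π s) = c s := by simp only [hc, h1]
    calc c s = c (π s) := h2.symm
    _ ≤ c s₀ := hs₀max (hπmem s)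
    _ ≤ K := le_max_left _ _
  have hlip : ∀ s, LipschitzWith K (fun x : Fin m → ℝ => -(W' (π s) *ᵥ x)) := by
    intro s
    apply LipschitzWith.of_dist_le_mul
    intro x y
    rw [dist_eq_norm, dist_eq_norm]
    have hne : -(W' (π s) *ᵥ x) - -(W' (π s) *ᵥ y) = -(W' (π s) *ᵥ (x - y)) := by
      rw [Matrix.mulVec_sub]; abel
    rw [hne, norm_neg]
    set z := x - y
    have hKnn : (0:ℝ) ≤ (K:ℝ) * ‖z‖ := mul_nonneg K.2 (norm_nonneg _)
    rw [pi_norm_le_iff_of_nonneg hKnn]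
    intro i
    have h1 : ‖(W' (π s) *ᵥ z) i‖ = |∑ j, W' (π s) i j * z j| := by
      simp [Matrix.mulVec, dotProduct, Real.norm_eq_abs]
    rw [h1]
    calc |∑ j, W' (π s) i j * z j| ≤ ∑ j, |W' (π s) i j * z j| :=
          Finset.abs_sum_le_sum_abs _ _
    _ = ∑ j, |W' (π s) i j| * |z j| := by simp [abs_mul]
    _ ≤ ∑ j, |W' (π s) i j| * ‖z‖ := by
          apply Finset.sum_le_sum
          intro j _
          exact mul_le_mul_of_nonneg_left (norm_le_pi_norm z j) (abs_nonneg _)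
    _ = (∑ j, |W' (π s) i j|) * ‖z‖ := by rw [Finset.sum_mul]
    _ ≤ c s * ‖z‖ := by
          apply mul_le_mul_of_nonneg_right _ (norm_nonneg _)
          exact Finset.single_le_sum (f := fun i => ∑ j, |W' (π s) i j|)
            (fun i _ => Finset.sum_nonneg fun j _ => abs_nonneg _) (Finset.mem_univ i)
    _ ≤ (K:ℝ) * ‖z‖ := mul_le_mul_of_nonneg_right (hcK s) (norm_nonneg _)
  have heq : Set.EqOn v (fun _ => (0 : Fin m → ℝ)) (Set.Icc a b) := by
    apply ODE_solution_unique_of_mem_Icc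
      (v := fun s x => -(W' (π s) *ᵥ x)) (s := fun _ => Set.univ)
      (fun s _ => (hlip s).lipschitzOnWith) ht₀mem
    · exact fun s _ => (hv s).continuousAt.continuousWithinAt
    · intro s hs
      rw [hπeq s (Set.mem_Icc_of_Ioo hs)]
      exact hv s
    · exact fun s _ => Set.mem_univ _
    · exact continuousOn_const
    · intro s hs
      simpa using hasDerivAt_const s (0 : Fin m → ℝ)
    · exact fun s _ => Set.mem_univ _
    · exact h0
  exact heq htmem

/-- Main theorem (invariance, time scale 𝕋 = ℝ): the time-varying subspace
`im (B·P₀)` is invariant for the inherent equation `u′ = W′·u + M·u + g`, where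
`W = B·P₀·B⁻` with `B⁻·B = P₀`, `P₀·P₀ = P₀`, `W` continuously differentiable, and
`M`, `g` continuous with `W·M = M` and `W·g = g`. -/
theorem inherent_equation_invariance {n m : ℕ}
    (B : ℝ → Matrix (Fin m) (Fin n) ℝ)
    (Binv : ℝ → Matrix (Fin n) (Fin m) ℝ)
    (P₀ : ℝ → Matrix (Fin n) (Fin n) ℝ)
    (h3 : ∀ t, Binv t * B t = P₀ t)
    (hproj : ∀ t, P₀ t * P₀ t = P₀ t)
    (W' : ℝ → Matrix (Fin m) (Fin m) ℝ)
    (hW : ∀ t i j, HasDerivAt (fun s => (B s * P₀ s * Binv s) i j) (W' t i j) t)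
    (hW' : Continuous W')
    (M : ℝ → Matrix (Fin m) (Fin m) ℝ) (g : ℝ → Fin m → ℝ)
    (hM : Continuous M) (hg : Continuous g)
    (hWM : ∀ t, (B t * P₀ t * Binv t) * M t = M t)
    (hWg : ∀ t, (B t * P₀ t * Binv t) *ᵥ g t = g t)
    (u : ℝ → Fin m → ℝ)
    (hu : ∀ t, HasDerivAt u (W' t *ᵥ u t + M t *ᵥ u t + g t) t)
    (t₀ : ℝ)
    (h0 : u t₀ ∈ LinearMap.range (B t₀ * P₀ t₀).mulVecLin) :
    ∀ t, u t ∈ LinearMap.range (B t * P₀ t).mulVecLin := by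
  set W : ℝ → Matrix (Fin m) (Fin m) ℝ := fun t => B t * P₀ t * Binv t with hWdef
  -- W * B * P₀ = B * P₀
  have e1 : ∀ t, W t * (B t * P₀ t) = B t * P₀ t := by
    intro t
    show B t * P₀ t * Binv t * (B t * P₀ t) = B t * P₀ t
    rw [Matrix.mul_assoc (B t * P₀ t) (Binv t) (B t * P₀ t),
      ← Matrix.mul_assoc (Binv t) (B t) (P₀ t), h3, hproj,
      Matrix.mul_assoc (B t) (P₀ t) (P₀ t), hproj]
  have hWW : ∀ t, W t * W t = W t := by
    intro t
    calc W t * W t = W t * (B t * P₀ t) * Binv t :=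
          (Matrix.mul_assoc (W t) (B t * P₀ t) (Binv t)).symm
    _ = B t * P₀ t * Binv t := by rw [e1]
  -- membership characterization
  have hmem : ∀ t (x : Fin m → ℝ),
      x ∈ LinearMap.range (B t * P₀ t).mulVecLin ↔ W t *ᵥ x = x := by
    intro t x
    constructor
    · rintro ⟨y, rfl⟩
      simp only [Matrix.mulVecLin_apply, Matrix.mulVec_mulVec]
      rw [e1]
    · intro hx
      exact ⟨Binv t *ᵥ x, by
        simp only [Matrix.mulVecLin_apply, Matrix.mulVec_mulVec]
        rw [show B t * P₀ t * Binv t = W t from rfl, hx]⟩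
  -- W' = W' * W + W * W'
  have hWders : ∀ t, W' t * W t + W t * W' t = W' t := by
    intro t
    ext i j
    have d1 : HasDerivAt (fun s => (W s * W s) i j)
        ((W' t * W t + W t * W' t) i j) t := by
      have : ∀ k ∈ Finset.univ, HasDerivAt (fun s => W s i k * W s k j)
          (W' t i k * W t k j + W t i k * W' t k j) t :=
        fun k _ => (hW t i k).mul (hW t k j)
      have h := HasDerivAt.fun_sum this
      simp only [Matrix.add_apply, Matrix.mul_apply]
      rw [← Finset.sum_add_distrib]
      convert h using 2 with s
    have d2 : HasDerivAt (fun s => (W s * W s) i j) (W' t i j) t := by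
      have : (fun s => (W s * W s) i j) = fun s => W s i j := by
        funext s
        rw [hWW s]
      rw [this]
      exact hW t i j
    exact d1.unique d2
  have hid : ∀ t, W t * W' t = W' t - W' t * W t := by
    intro t
    exact eq_sub_of_add_eq' (hWders t)
  -- v := u - W u
  set v : ℝ → Fin m → ℝ := fun s => u s - W s *ᵥ u s with hvdef
  have hv : ∀ t, HasDerivAt v (-(W' t *ᵥ v t)) t := by
    intro t
    have h1 : HasDerivAt (fun s => W s *ᵥ u s)
        (W' t *ᵥ u t + W t *ᵥ (W' t *ᵥ u t + M t *ᵥ u t + g t)) t :=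
      hasDerivAt_mulVec'_s15 (hW t) (hu t)
    have h2 := (hu t).sub h1
    convert h2 using 1
    · rfl
    · rfl
    · rfl
    · rfl
    have hWM' : W t * M t = M t := hWM t
    have hWg' : W t *ᵥ g t = g t := hWg t
    have hWW'' : W t * W' t = W' t - W' t * W t := hid t
    simp only [hvdef, Matrix.mulVec_add, Matrix.mulVec_sub, Matrix.mulVec_mulVec,
      hWM', hWg', hWW'', Matrix.sub_mulVec]
    abel
  have hz : ∀ t, v t = 0 := by
    apply ode_vanish W' hW' v hv t₀
    rw [hvdef]
    simp only []
    rw [(hmem t₀ (u t₀)).mp h0, sub_self]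
  intro t
  rw [hmem t (u t)]
  have := hz t
  rw [hvdef] at this
  simp only [] at this
  have := sub_eq_zero.mp this
  exact this.symm
end
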